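/- Let g be a Lie algebra and r ∈ g ⊗ g an element satisfying the classical Yang–Baxter equation [[r,r]] := [r₁₂,r₁₃] + [r₁₂,r₂₃] + [r₁₃,r₂₃] = 0, and suppose the symmetric part r₊ = (r + τ(r))/2 is ad-invariant. Then the coboundary δx := ad_x(r) makes (g, δ) a Lie bialgebra. -/
import Mathlib

set_option linter.unusedSectionVars false


open TensorProduct

variable (k : Type*) [Field k] [CharZero k]
variable (g : Type*) [LieRing g] [LieAlgebra k g]

/-- The cyclic rotation `(a ⊗ b) ⊗ c ↦ (c ⊗ a) ⊗ b` on a triple tensor product. -/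
noncomputable def cyc : (g ⊗[k] g) ⊗[k] g →ₗ[k] (g ⊗[k] g) ⊗[k] g :=
  (TensorProduct.assoc k g g g).symm.toLinearMap ∘ₗ
    (TensorProduct.comm k (g ⊗[k] g) g).toLinearMap

variable {k g}

/-- Given the bracket of `g` as a bilinear map `br`, this sends
`(a ⊗ b) ⊗ (c ⊗ d) ↦ ([a,c] ⊗ b) ⊗ d`; applied to `r ⊗ r` it yields `[r₁₂, r₁₃]`. -/
noncomputable def schouten1213 (br : g →ₗ[k] g →ₗ[k] g) :
    (g ⊗[k] g) ⊗[k] (g ⊗[k] g) →ₗ[k] (g ⊗[k] g) ⊗[k] g :=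
  (TensorProduct.assoc k g g g).symm.toLinearMap ∘ₗ
    TensorProduct.map (TensorProduct.lift br) LinearMap.id ∘ₗ
      (TensorProduct.tensorTensorTensorComm k g g g g).toLinearMap

/-- `(a ⊗ b) ⊗ (c ⊗ d) ↦ (a ⊗ [b,c]) ⊗ d`; applied to `r ⊗ r` it yields `[r₁₂, r₂₃]`. -/
noncomputable def schouten1223 (br : g →ₗ[k] g →ₗ[k] g) :
    (g ⊗[k] g) ⊗[k] (g ⊗[k] g) →ₗ[k] (g ⊗[k] g) ⊗[k] g :=
  (TensorProduct.assoc k g g g).symm.toLinearMap ∘ₗ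
    TensorProduct.map LinearMap.id (TensorProduct.map (TensorProduct.lift br) LinearMap.id) ∘ₗ
      TensorProduct.map LinearMap.id (TensorProduct.assoc k g g g).symm.toLinearMap ∘ₗ
        (TensorProduct.assoc k g g (g ⊗[k] g)).toLinearMap

/-- `(a ⊗ b) ⊗ (c ⊗ d) ↦ (a ⊗ c) ⊗ [b,d]`; applied to `r ⊗ r` it yields `[r₁₃, r₂₃]`. -/
noncomputable def schouten1323 (br : g →ₗ[k] g →ₗ[k] g) :
    (g ⊗[k] g) ⊗[k] (g ⊗[k] g) →ₗ[k] (g ⊗[k] g) ⊗[k] g :=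
  TensorProduct.map LinearMap.id (TensorProduct.lift br) ∘ₗ
    (TensorProduct.tensorTensorTensorComm k g g g g).toLinearMap

/-- The coboundary `δ x = ad_x(r)` of an element `r ∈ g ⊗ g`, as a linear map. -/
noncomputable def coboundary (r : g ⊗[k] g) : g →ₗ[k] g ⊗[k] g where
  toFun x := ⁅x, r⁆
  map_add' x y := add_lie x y r
  map_smul' t x := smul_lie t x r

/-! ### Auxiliary definitions and lemmas -/

section Aux

@[simp] lemma coboundary_apply (r : g ⊗[k] g) (y : g) : coboundary r y = ⁅y, r⁆ := rfl

lemma coboundary_add (r s : g ⊗[k] g) :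
    coboundary (r + s) = coboundary r + coboundary s :=
  LinearMap.ext fun y => by simp [lie_add]

lemma coboundary_zero : coboundary (0 : g ⊗[k] g) = 0 :=
  LinearMap.ext fun y => by simp

lemma skw (p q : g) : ⁅q, p⁆ = -⁅p, q⁆ := by rw [← lie_skew p q, neg_neg]

lemma jac3 (u v w : g) : ⁅w, ⁅u, v⁆⁆ = ⁅u, ⁅w, v⁆⁆ - ⁅v, ⁅w, u⁆⁆ := by
  rw [leibniz_lie, skw v ⁅w, u⁆]; abel

@[simp] lemma cyc_tmul (p q w : g) :
    cyc k g ((p ⊗ₜ[k] q) ⊗ₜ[k] w) = (w ⊗ₜ[k] p) ⊗ₜ[k] q := by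
  simp [cyc]

/-- `id + τ`, twice the symmetrization. -/
noncomputable def sig : g ⊗[k] g →ₗ[k] g ⊗[k] g :=
  LinearMap.id + (TensorProduct.comm k g g).toLinearMap

lemma sig_apply (t : g ⊗[k] g) : sig t = t + TensorProduct.comm k g g t := by
  simp [sig]

@[simp] lemma sig_tmul (p q : g) : sig (p ⊗ₜ[k] q) = p ⊗ₜ[k] q + q ⊗ₜ[k] p := by
  simp [sig]

/-- `ad x` as a linear map. -/
noncomputable def adE (x : g) : g →ₗ[k] g where
  toFun y := ⁅x, y⁆
  map_add' a b := lie_add x a b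
  map_smul' t a := by simp

@[simp] lemma adE_apply (x y : g) : adE (k := k) x y = ⁅x, y⁆ := rfl

lemma adE_add (a b : g) : adE (k := k) (a + b) = adE a + adE b :=
  LinearMap.ext fun y => by simp [add_lie]

noncomputable def psi1 (x : g) (w : g ⊗[k] g) : g →ₗ[k] g ⊗[k] g where
  toFun a := ⁅⁅x, a⁆, w⁆
  map_add' a b := by simp [lie_add, add_lie]
  map_smul' t a := by simp [lie_smul, smul_lie]

@[simp] lemma psi1_apply (x : g) (w : g ⊗[k] g) (a : g) :
    psi1 x w a = ⁅⁅x, a⁆, w⁆ := rfl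

noncomputable def psi2 (w : g ⊗[k] g) : g →ₗ[k] g ⊗[k] g where
  toFun a := ⁅a, w⁆
  map_add' a b := add_lie a b w
  map_smul' t a := smul_lie t a w

@[simp] lemma psi2_apply (w : g ⊗[k] g) (a : g) : psi2 w a = ⁅a, w⁆ := rfl

noncomputable def psi3 (x : g) (w : g ⊗[k] g) : g →ₗ[k] g ⊗[k] g where
  toFun a := LinearMap.rTensor g (adE a) ⁅x, w⁆
  map_add' a b := by
    simp [adE_add, LinearMap.rTensor_add]
  map_smul' t a := by
    have : adE (k := k) (t • a) = t • adE a := LinearMap.ext fun y => by simp [smul_lie]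
    simp [this, LinearMap.rTensor_smul]

@[simp] lemma psi3_apply (x : g) (w : g ⊗[k] g) (a : g) :
    psi3 x w a = LinearMap.rTensor g (adE a) ⁅x, w⁆ := rfl

noncomputable def psi4 (x : g) (w : g ⊗[k] g) : g →ₗ[k] g ⊗[k] g where
  toFun a := LinearMap.lTensor g (adE a) ⁅x, w⁆
  map_add' a b := by
    simp [adE_add, LinearMap.lTensor_add]
  map_smul' t a := by
    have : adE (k := k) (t • a) = t • adE a := LinearMap.ext fun y => by simp [smul_lie]
    simp [this, LinearMap.lTensor_smul]

@[simp] lemma psi4_apply (x : g) (w : g ⊗[k] g) (a : g) :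
    psi4 x w a = LinearMap.lTensor g (adE a) ⁅x, w⁆ := rfl

lemma psi1_addw (x : g) (w w' : g ⊗[k] g) :
    psi1 x (w + w') = psi1 x w + psi1 x w' := LinearMap.ext fun a => by simp [lie_add]

lemma psi2_addw (w w' : g ⊗[k] g) :
    psi2 (w + w') = psi2 w + psi2 w' := LinearMap.ext fun a => by simp [lie_add]

lemma psi3_addw (x : g) (w w' : g ⊗[k] g) :
    psi3 x (w + w') = psi3 x w + psi3 x w' := LinearMap.ext fun a => by simp [lie_add]

lemma psi4_addw (x : g) (w w' : g ⊗[k] g) :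
    psi4 x (w + w') = psi4 x w + psi4 x w' := LinearMap.ext fun a => by simp [lie_add]

lemma psi1_zerow (x : g) : psi1 x (0 : g ⊗[k] g) = 0 := LinearMap.ext fun a => by simp

lemma psi2_zerow : psi2 (0 : g ⊗[k] g) = 0 := LinearMap.ext fun a => by simp

lemma psi3_zerow (x : g) : psi3 x (0 : g ⊗[k] g) = 0 := LinearMap.ext fun a => by simp

lemma psi4_zerow (x : g) : psi4 x (0 : g ⊗[k] g) = 0 := LinearMap.ext fun a => by simp

/-- The basic term of co-Jacobi: `(δ_t ⊗ id)(ad_x u)`. -/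
noncomputable def EE (x : g) (t u : g ⊗[k] g) : (g ⊗[k] g) ⊗[k] g :=
  TensorProduct.map (coboundary t) LinearMap.id ⁅x, u⁆

/-- Cyclic sum of `EE`. -/
noncomputable def altE (x : g) (t u : g ⊗[k] g) : (g ⊗[k] g) ⊗[k] g :=
  EE x t u + cyc k g (EE x t u) + cyc k g (cyc k g (EE x t u))

/-- Sum of the three Schouten-type maps. -/
noncomputable def ssum (br : g →ₗ[k] g →ₗ[k] g) (t u : g ⊗[k] g) : (g ⊗[k] g) ⊗[k] g :=
  schouten1213 br (t ⊗ₜ[k] u) + schouten1223 br (t ⊗ₜ[k] u) + schouten1323 br (t ⊗ₜ[k] u)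

lemma schouten1213_tmul (br : g →ₗ[k] g →ₗ[k] g) (a b c d : g) :
    schouten1213 br ((a ⊗ₜ[k] b) ⊗ₜ[k] (c ⊗ₜ[k] d)) = ((br a c) ⊗ₜ[k] b) ⊗ₜ[k] d := by
  simp [schouten1213, tensorTensorTensorComm_tmul]

lemma schouten1223_tmul (br : g →ₗ[k] g →ₗ[k] g) (a b c d : g) :
    schouten1223 br ((a ⊗ₜ[k] b) ⊗ₜ[k] (c ⊗ₜ[k] d)) = (a ⊗ₜ[k] (br b c)) ⊗ₜ[k] d := by
  simp [schouten1223]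

lemma schouten1323_tmul (br : g →ₗ[k] g →ₗ[k] g) (a b c d : g) :
    schouten1323 br ((a ⊗ₜ[k] b) ⊗ₜ[k] (c ⊗ₜ[k] d)) = (a ⊗ₜ[k] c) ⊗ₜ[k] (br b d) := by
  simp [schouten1323, tensorTensorTensorComm_tmul]

/-- The full master expression that vanishes identically. -/
noncomputable def bigLHS (br : g →ₗ[k] g →ₗ[k] g) (x : g) (t u : g ⊗[k] g) :
    (g ⊗[k] g) ⊗[k] g :=
  altE x t u + altE x u t + ⁅x, ssum br t u⁆ + ⁅x, ssum br u t⁆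
  + TensorProduct.map (psi4 x (sig u)) LinearMap.id t
  + cyc k g ((TensorProduct.assoc k g g g).symm
      (TensorProduct.map LinearMap.id (psi1 x (sig u)) t))
  + cyc k g ((TensorProduct.assoc k g g g).symm
      (TensorProduct.map (adE x) (psi2 (sig u)) t))
  + cyc k g ((TensorProduct.assoc k g g g).symm
      (TensorProduct.map LinearMap.id (psi3 x (sig u)) t))
  - (TensorProduct.assoc k g g g).symm
      (TensorProduct.map LinearMap.id (psi4 x (sig u)) t)
  - cyc k g (cyc k g (TensorProduct.map (psi1 x (sig t)) LinearMap.id u))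
  - cyc k g (cyc k g (TensorProduct.map (psi2 (sig t)) (adE x) u))
  + TensorProduct.map (psi3 x (sig t)) LinearMap.id u
  + TensorProduct.map (psi4 x (sig t)) LinearMap.id u
  + cyc k g (TensorProduct.map (psi4 x (sig t)) LinearMap.id u)
  + cyc k g ((TensorProduct.assoc k g g g).symm
      (TensorProduct.map LinearMap.id (psi3 x (sig t)) u))
  + cyc k g (cyc k g ((TensorProduct.assoc k g g g).symm
      (TensorProduct.map LinearMap.id (psi3 x (sig t)) u)))

set_option maxHeartbeats 1000000 in
lemma master (br : g →ₗ[k] g →ₗ[k] g) (hbr : ∀ x y, br x y = ⁅x, y⁆) (x : g) :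
    ∀ t u : g ⊗[k] g, bigLHS br x t u = 0 := by
  intro t u
  induction t using TensorProduct.induction_on generalizing u with
  | zero =>
      simp [bigLHS, altE, EE, ssum, coboundary_zero, psi1_zerow, psi2_zerow, psi3_zerow,
        psi4_zerow, TensorProduct.map_zero_left, TensorProduct.map_zero_right]
  | add t1 t2 h1 h2 =>
      have e : bigLHS br x (t1 + t2) u = bigLHS br x t1 u + bigLHS br x t2 u := by
        simp only [bigLHS, altE, EE, ssum, coboundary_add, TensorProduct.map_add_left,
          TensorProduct.map_add_right, LinearMap.add_apply, lie_add, add_tmul, tmul_add,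
          map_add, psi1_addw, psi2_addw, psi3_addw, psi4_addw]
        abel
      rw [e, h1 u, h2 u, add_zero]
  | tmul a b =>
      induction u using TensorProduct.induction_on with
      | zero =>
          simp [bigLHS, altE, EE, ssum, coboundary_zero, psi1_zerow, psi2_zerow, psi3_zerow,
            psi4_zerow, TensorProduct.map_zero_left, TensorProduct.map_zero_right]
      | add u1 u2 h1 h2 =>
          have e : bigLHS br x (a ⊗ₜ[k] b) (u1 + u2)
              = bigLHS br x (a ⊗ₜ[k] b) u1 + bigLHS br x (a ⊗ₜ[k] b) u2 := by
            simp only [bigLHS, altE, EE, ssum, coboundary_add, TensorProduct.map_add_left,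
              TensorProduct.map_add_right, LinearMap.add_apply, lie_add, add_tmul, tmul_add,
              map_add, psi1_addw, psi2_addw, psi3_addw, psi4_addw]
            abel
          rw [e, h1, h2, add_zero]
      | tmul c d =>
          simp only [bigLHS, altE, EE, ssum, coboundary_apply, sig_tmul,
            psi1_addw, psi2_addw, psi3_addw, psi4_addw, LinearMap.add_apply,
            TensorProduct.map_tmul, LinearMap.id_coe, id_eq, hbr,
            schouten1213_tmul, schouten1223_tmul, schouten1323_tmul,
            TensorProduct.LieModule.lie_tmul_right, lie_add, lie_sub, lie_neg, lie_zero,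
            lie_lie, psi1_apply, psi2_apply, psi3_apply, psi4_apply, adE_apply,
            LinearMap.rTensor_tmul, LinearMap.lTensor_tmul,
            cyc_tmul, TensorProduct.assoc_symm_tmul,
            map_add, map_sub, map_neg, add_tmul, tmul_add, sub_tmul, tmul_sub,
            neg_tmul, tmul_neg]
          simp only [skw a b, skw a c, skw a d, skw b c, skw b d, skw c d,
            skw a x, skw b x, skw c x, skw d x,
            jac3 a b x, jac3 a c x, jac3 a d x, jac3 b c x, jac3 b d x, jac3 c d x,
            lie_neg, neg_neg, lie_sub, sub_tmul, tmul_sub, neg_tmul, tmul_neg]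
          abel

/-- if `r` satisfies the classical Yang–Baxter equation and its symmetric
part `r₊ = (r + τ r)/2` is ad-invariant, then `δ x := ad_x(r)` makes `g` a Lie bialgebra:
`δ` is anticocommutative, satisfies co-Jacobi, and is a 1-cocycle. -/
theorem coboundary_of_CYBE_isLieBialgebra
    (br : g →ₗ[k] g →ₗ[k] g) (hbr : ∀ x y, br x y = ⁅x, y⁆)
    (r : g ⊗[k] g)
    (hCYBE : schouten1213 br (r ⊗ₜ[k] r) + schouten1223 br (r ⊗ₜ[k] r)
        + schouten1323 br (r ⊗ₜ[k] r) = 0)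
    (hinv : ∀ x : g, ⁅x, ((1 : k)/2) • (r + TensorProduct.comm k g g r)⁆ = 0) :
    (∀ x : g, coboundary r x + TensorProduct.comm k g g (coboundary r x) = 0) ∧
    (∀ x : g, (TensorProduct.map (coboundary r) LinearMap.id) (coboundary r x)
        + cyc k g ((TensorProduct.map (coboundary r) LinearMap.id) (coboundary r x))
        + cyc k g (cyc k g ((TensorProduct.map (coboundary r) LinearMap.id) (coboundary r x)))
        = 0) ∧
    (∀ x y : g, coboundary r ⁅x, y⁆ = ⁅x, coboundary r y⁆ - ⁅y, coboundary r x⁆) := by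
  have hinv' : ∀ y : g, ⁅y, sig r⁆ = 0 := by
    intro y
    have h := hinv y
    rw [lie_smul] at h
    rcases smul_eq_zero.mp h with h' | h'
    · exact absurd h' (by norm_num)
    · rw [sig_apply]; exact h'
  refine ⟨?_, ?_, ?_⟩
  · -- anticocommutativity
    intro x
    have hc : ∀ t : g ⊗[k] g,
        TensorProduct.comm k g g ⁅x, t⁆ = ⁅x, TensorProduct.comm k g g t⁆ := by
      intro t
      induction t using TensorProduct.induction_on with
      | zero => simp
      | tmul p q => simp [TensorProduct.LieModule.lie_tmul_right, add_comm]
      | add s1 s2 e1 e2 => simp [lie_add, e1, e2]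
    have h0 := hinv' x
    rw [sig_apply, lie_add] at h0
    calc coboundary r x + TensorProduct.comm k g g (coboundary r x)
        = ⁅x, r⁆ + ⁅x, TensorProduct.comm k g g r⁆ := by rw [coboundary_apply, hc]
      _ = 0 := h0
  · -- co-Jacobi
    intro x
    have hψ1 : psi1 x (sig r) = 0 := LinearMap.ext fun a => by
      simp only [psi1_apply]; exact hinv' _
    have hψ2 : psi2 (sig r) = 0 := LinearMap.ext fun a => by
      simp only [psi2_apply]; exact hinv' _
    have hψ3 : psi3 x (sig r) = 0 := LinearMap.ext fun a => by
      simp only [psi3_apply, hinv' x, map_zero, LinearMap.zero_apply]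
    have hψ4 : psi4 x (sig r) = 0 := LinearMap.ext fun a => by
      simp only [psi4_apply, hinv' x, map_zero, LinearMap.zero_apply]
    have hS : ssum br r r = 0 := hCYBE
    have hM := master br hbr x r r
    simp only [bigLHS, hψ1, hψ2, hψ3, hψ4, hS, lie_zero,
      TensorProduct.map_zero_left, TensorProduct.map_zero_right, LinearMap.zero_apply,
      map_zero, add_zero, sub_zero, zero_add] at hM
    have hA : altE x r r = 0 := by
      have h2 : (2 : k) • altE x r r = 0 := by rw [two_smul]; exact hM
      rcases smul_eq_zero.mp h2 with h' | h'
      · exact absurd h' two_ne_zero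
      · exact h'
    simpa [altE, EE] using hA
  · -- 1-cocycle
    intro x y
    calc coboundary r ⁅x, y⁆ = ⁅⁅x, y⁆, r⁆ := rfl
      _ = ⁅x, coboundary r y⁆ - ⁅y, coboundary r x⁆ := by
          rw [lie_lie]; rfl
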